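/- arXiv:1208.3827 — 2 statements merged into one kernel-verified Lean document; each statement's English description precedes it below -/
import Mathlib

section
/- The operators −∇²/2, R²/2 and 𝔼 + M/2 realize the Lie algebra sl(2): as linear operators on 𝒫 (and on C^∞(ℝ^m)⊗Λ_{2n}) one has the commutation relations [∇²/2, R²/2] = 𝔼 + M/2, [∇²/2, 𝔼 + M/2] = 2·(∇²/2), and [R²/2, 𝔼 + M/2] = −2·(R²/2). -/
/-!
All computations take place in rings of linear endomorphisms, with the commutator calculus only.
The bosonic operators ∂_i, x_i satisfy the canonical commutation relations, the fermionic ones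
the canonical anticommutation relations, and operators acting on different tensor factors
commute, so every bracket splits into a bosonic and a fermionic part. In both parts
⁅𝔼, x⁆ = x and ⁅𝔼, ∂⁆ = -∂ on generators, hence ⁅𝔼, ∇²⁆ = -2∇² and ⁅𝔼, R²⁆ = 2R². Through
⁅∇², x⁆ ∝ ∂ the bracket ⁅∇², R²⁆ becomes 4𝔼_b + 2m, resp. 4𝔼_f - 4n (for odd generators via
⁅ab, c⁆ = a{b, c} - {a, c}b), which add up to 4𝔼 + 2M.
-/

/- ## Setup: super polynomials on ℝ^{m|2n} -/

open scoped TensorProduct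

noncomputable section

set_option synthInstance.maxHeartbeats 1000000
set_option maxHeartbeats 1000000

/-- The Grassmann algebra Λ_{2n} with 2n anticommuting generators, realized as the
exterior algebra of ℝ^{2n}. -/
abbrev GrassmannAlgebra (n : ℕ) : Type := ExteriorAlgebra ℝ (Fin (2*n) → ℝ)

/-- The algebra of super polynomials 𝒫 = ℝ[x_1,…,x_m] ⊗ Λ_{2n}. -/
abbrev SuperPoly (m n : ℕ) : Type := MvPolynomial (Fin m) ℝ ⊗[ℝ] GrassmannAlgebra n

instance (m n : ℕ) : Ring (SuperPoly m n) := Algebra.TensorProduct.instRing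
instance (m n : ℕ) : Algebra ℝ (SuperPoly m n) := Algebra.TensorProduct.instAlgebra

namespace SuperPoly

variable (m n : ℕ)

/-- The fermionic generator x`_j (0-indexed) of the Grassmann algebra. -/
def gen (j : Fin (2*n)) : GrassmannAlgebra n := ExteriorAlgebra.ι ℝ (Pi.single j 1)

/-- The bosonic variable x_i as a super polynomial. -/
def xb (i : Fin m) : SuperPoly m n := MvPolynomial.X i ⊗ₜ 1

/-- The fermionic variable x`_j (0-indexed) as a super polynomial. -/
def xf (j : Fin (2*n)) : SuperPoly m n := 1 ⊗ₜ gen n j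

/-- The bosonic partial derivative ∂_{x_i}. -/
def Db (i : Fin m) : SuperPoly m n →ₗ[ℝ] SuperPoly m n :=
  LinearMap.rTensor (GrassmannAlgebra n) (MvPolynomial.pderiv i).toLinearMap

/-- The fermionic partial derivative ∂_{x`_j} on Λ_{2n}: the unique odd (left) derivation
with ∂_{x`_j}(x`_k) = δ_{jk}, realized as contraction with the j-th dual basis vector. -/
def fdLam (j : Fin (2*n)) : GrassmannAlgebra n →ₗ[ℝ] GrassmannAlgebra n :=
  CliffordAlgebra.contractLeft (LinearMap.proj j)

/-- The fermionic partial derivative ∂_{x`_j} on 𝒫. -/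
def Df (j : Fin (2*n)) : SuperPoly m n →ₗ[ℝ] SuperPoly m n :=
  LinearMap.lTensor (MvPolynomial (Fin m) ℝ) (fdLam n j)

/-- Multiplication (on the left) by a super polynomial, as a linear operator. -/
def mulOp (a : SuperPoly m n) : SuperPoly m n →ₗ[ℝ] SuperPoly m n :=
  LinearMap.mulLeft ℝ a

/-- The index (0-based) `2j` among the fermionic indices. -/
def oddIdx (j : Fin n) : Fin (2*n) := ⟨2*j.1, by have := j.2; omega⟩

/-- The index (0-based) `2j+1` among the fermionic indices. -/
def evenIdx (j : Fin n) : Fin (2*n) := ⟨2*j.1+1, by have := j.2; omega⟩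

/-- r² = Σ x_i². -/
def r2 : SuperPoly m n := ∑ i : Fin m, xb m n i * xb m n i

/-- θ² = −Σ_{j=1}^n x`_{2j−1} x`_{2j}. -/
def θ2 : SuperPoly m n := - ∑ j : Fin n, xf m n (oddIdx n j) * xf m n (evenIdx n j)

/-- R² = r² + θ². -/
def R2 : SuperPoly m n := r2 m n + θ2 m n

/-- The bosonic Laplace operator ∇_b² = Σ ∂_{x_i}². -/
def lapB : SuperPoly m n →ₗ[ℝ] SuperPoly m n := ∑ i : Fin m, Db m n i ∘ₗ Db m n i

/-- The fermionic Laplace operator −4 Σ ∂_{x`_{2j−1}} ∂_{x`_{2j}}. -/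
def lapF : SuperPoly m n →ₗ[ℝ] SuperPoly m n :=
  (-4 : ℝ) • ∑ j : Fin n, Df m n (oddIdx n j) ∘ₗ Df m n (evenIdx n j)

/-- The super Laplace operator ∇² = ∇_b² − 4 Σ ∂_{x`_{2j−1}} ∂_{x`_{2j}}. -/
def lap : SuperPoly m n →ₗ[ℝ] SuperPoly m n := lapB m n + lapF m n

/-- The bosonic Euler operator 𝔼_b = Σ x_i ∂_{x_i}. -/
def eulerB : SuperPoly m n →ₗ[ℝ] SuperPoly m n :=
  ∑ i : Fin m, mulOp m n (xb m n i) ∘ₗ Db m n i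

/-- The fermionic Euler operator 𝔼_f = Σ x`_j ∂_{x`_j}. -/
def eulerF : SuperPoly m n →ₗ[ℝ] SuperPoly m n :=
  ∑ j : Fin (2*n), mulOp m n (xf m n j) ∘ₗ Df m n j

/-- The super Euler operator 𝔼. -/
def euler : SuperPoly m n →ₗ[ℝ] SuperPoly m n := eulerB m n + eulerF m n

/-- The space 𝒫_k of super polynomials homogeneous of degree k (eigenspace of 𝔼). -/
def Pdeg (k : ℕ) : Submodule ℝ (SuperPoly m n) :=
  LinearMap.ker (euler m n - (k : ℝ) • LinearMap.id)

/-- The space ℋ_k = 𝒫_k ∩ ker ∇² of spherical harmonics of degree k. -/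
def Hdeg (k : ℕ) : Submodule ℝ (SuperPoly m n) :=
  Pdeg m n k ⊓ LinearMap.ker (lap m n)

/-- The purely bosonic spherical harmonics ℋ_p^b of degree p (inside 𝒫). -/
def Hb (p : ℕ) : Submodule ℝ (SuperPoly m n) :=
  LinearMap.ker (lapB m n) ⊓ LinearMap.ker (eulerB m n - (p : ℝ) • LinearMap.id) ⊓
    LinearMap.ker (eulerF m n)

/-- The purely fermionic spherical harmonics ℋ_q^f of degree q (inside 𝒫). -/
def Hf (q : ℕ) : Submodule ℝ (SuperPoly m n) :=
  LinearMap.ker (lapF m n) ⊓ LinearMap.ker (eulerF m n - (q : ℝ) • LinearMap.id) ⊓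
    LinearMap.ker (eulerB m n)

/-! ### The orthosymplectic operators -/

/-- The supervector entry X_i, i = 1,…,m+2n (0-indexed). -/
def XV (i : Fin (m + 2*n)) : SuperPoly m n :=
  if h : i.1 < m then xb m n ⟨i.1, h⟩ else xf m n ⟨i.1 - m, by have := i.2; omega⟩

/-- The partial derivative ∂_{X_i}. -/
def DX (i : Fin (m + 2*n)) : SuperPoly m n →ₗ[ℝ] SuperPoly m n :=
  if h : i.1 < m then Db m n ⟨i.1, h⟩ else Df m n ⟨i.1 - m, by have := i.2; omega⟩

/-- (−1)^{[i]}: 1 on bosonic indices, −1 on fermionic indices. -/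
def sgn (i : Fin (m + 2*n)) : ℝ := if i.1 < m then 1 else -1

/-- (−1)^{[i][j]}. -/
def sgn2 (i j : Fin (m + 2*n)) : ℝ := if m ≤ i.1 ∧ m ≤ j.1 then -1 else 1

/-- The inverse g⁻¹ of the orthosymplectic metric g = diag(I_m, J), where J consists of n
diagonal 2×2 blocks (1/2)·[[0,−1],[1,0]]; so g⁻¹ = diag(I_m, J⁻¹) with J⁻¹ having
2×2 blocks [[0,2],[−2,0]]. -/
def ginv (i j : Fin (m + 2*n)) : ℝ :=
  if i.1 < m ∧ j.1 < m then (if i = j then 1 else 0)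
  else if m ≤ i.1 ∧ m ≤ j.1 then
    (if j.1 = i.1 + 1 ∧ (i.1 - m) % 2 = 0 then 2
     else if i.1 = j.1 + 1 ∧ (j.1 - m) % 2 = 0 then -2 else 0)
  else 0

/-- ∇_i = Σ_j (g⁻¹)_{ji} (−1)^{[j]} ∂_{X_j}. -/
def nabla (i : Fin (m + 2*n)) : SuperPoly m n →ₗ[ℝ] SuperPoly m n :=
  ∑ j : Fin (m + 2*n), (ginv m n j i * sgn m n j) • DX m n j

/-- The orthosymplectic operator L_{ij} = X_i ∇_j − (−1)^{[i][j]} X_j ∇_i. -/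
def Lop (i j : Fin (m + 2*n)) : SuperPoly m n →ₗ[ℝ] SuperPoly m n :=
  mulOp m n (XV m n i) ∘ₗ nabla m n j - sgn2 m n i j • (mulOp m n (XV m n j) ∘ₗ nabla m n i)

/-- A subspace is 𝔬𝔰𝔭(m|2n)-invariant if it is stable under all L_{ij}, i ≤ j. -/
def IsInv (W : Submodule ℝ (SuperPoly m n)) : Prop :=
  ∀ i j : Fin (m + 2*n), i ≤ j → ∀ w ∈ W, Lop m n i j w ∈ W

/-! ### The polynomials f_{k,p,q} -/

/-- The coefficient a_s of `f_{k,p,q}`. -/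
def acoef (k p q s : ℕ) : ℝ :=
  (Nat.choose k s : ℝ) * ((Nat.factorial (n - q - s) : ℝ) / (Nat.factorial (n - q - k) : ℝ)) *
    (Real.Gamma ((m:ℝ)/2 + p + k) / Real.Gamma ((m:ℝ)/2 + p + k - s))

/-- The polynomial f_{k,p,q} = Σ_s a_s r^{2k−2s} θ^{2s}. -/
def fkpq (k p q : ℕ) : SuperPoly m n :=
  ∑ s ∈ Finset.range (k+1), acoef m n k p q s • (r2 m n ^ (k - s) * θ2 m n ^ s)

/-- The 𝔰𝔬(m)⊕𝔰𝔭(2n)-component f_{l,p,q}·ℋ_p^b·ℋ_q^f of ℋ_{2l+p+q} (the span of the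
products f_{l,p,q} H_p H_q with H_p ∈ ℋ_p^b, H_q ∈ ℋ_q^f). -/
def comp (l p q : ℕ) : Submodule ℝ (SuperPoly m n) :=
  Submodule.span ℝ {fkpq m n l p q} * Hb m n p * Hf m n q

end SuperPoly

namespace Ring

variable {A : Type*} [Ring A]

theorem lie_mul (a b c : A) : ⁅a, b * c⁆ = ⁅a, b⁆ * c + b * ⁅a, c⁆ := by
  simp only [lie_def]; noncomm_ring

theorem mul_lie (a b c : A) : ⁅a * b, c⁆ = a * ⁅b, c⁆ + ⁅a, c⁆ * b := by
  simp only [lie_def]; noncomm_ring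

theorem mul_lie_eq_anticomm (a b c : A) :
    ⁅a * b, c⁆ = a * (b * c + c * b) - (a * c + c * a) * b := by
  simp only [lie_def]; noncomm_ring

theorem neg_lie (a b : A) : ⁅-a, b⁆ = -⁅a, b⁆ := by
  simp only [lie_def]; noncomm_ring

theorem lie_neg (a b : A) : ⁅a, -b⁆ = -⁅a, b⁆ := by
  simp only [lie_def]; noncomm_ring

theorem smul_lie {R : Type*} [Semiring R] [Module R A] [IsScalarTower R A A] [SMulCommClass R A A]
    (r : R) (a b : A) : ⁅r • a, b⁆ = r • ⁅a, b⁆ := by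
  rw [lie_def, lie_def, smul_mul_assoc, mul_smul_comm, smul_sub]

end Ring

section LieCalculus

-- Kept local: while it is active, `Module ℝ` on a concrete algebra is inferred through
-- `LieAlgebra`, and rewriting against the definitions of `SuperPoly` fails. This is why the
-- `Ring` bracket lemmas above avoid `LieRing`.
attribute [local instance 100] LieRing.ofAssociativeRing

section CCR

variable {A ι : Type*} [Ring A] [DecidableEq ι]

structure IsCCR (d x : ι → A) : Prop where
  lie_d_x : ∀ i k, ⁅d i, x k⁆ = if i = k then 1 else 0
  lie_d_d : ∀ i k, ⁅d i, d k⁆ = 0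
  lie_x_x : ∀ i k, ⁅x i, x k⁆ = 0

namespace IsCCR

variable {d x : ι → A}

theorem lie_x_d (h : IsCCR d x) (i k : ι) : ⁅x i, d k⁆ = if k = i then -1 else 0 := by
  rw [← lie_skew, h.lie_d_x, apply_ite Neg.neg, neg_zero]

variable [Fintype ι]

theorem lie_euler_x (h : IsCCR d x) (k : ι) : ⁅∑ i, x i * d i, x k⁆ = x k := by
  simp [sum_lie, Ring.mul_lie, h.lie_d_x, h.lie_x_x]

theorem lie_euler_d (h : IsCCR d x) (k : ι) : ⁅∑ i, x i * d i, d k⁆ = -d k := by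
  simp [sum_lie, Ring.mul_lie, h.lie_d_d, h.lie_x_d]

theorem lie_laplacian_x (h : IsCCR d x) (k : ι) : ⁅∑ i, d i * d i, x k⁆ = 2 • d k := by
  rw [two_nsmul]
  simp [sum_lie, Ring.mul_lie, h.lie_d_x, Finset.sum_add_distrib]

theorem lie_laplacian_sumSq (h : IsCCR d x) :
    ⁅∑ i, d i * d i, ∑ i, x i * x i⁆ = 4 • ∑ i, x i * d i + (2 * Fintype.card ι) • 1 := by
  have hdx : ∀ i, d i * x i = x i * d i + 1 := fun i => by
    rw [← sub_eq_iff_eq_add', ← Ring.lie_def, h.lie_d_x, if_pos rfl]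
  rw [mul_comm, ← smul_smul, ← Finset.card_univ, ← Finset.sum_const, Finset.smul_sum,
    ← Finset.sum_add_distrib]
  simp only [lie_sum, Ring.lie_mul, h.lie_laplacian_x]
  refine Finset.sum_congr rfl fun i _ => ?_
  rw [smul_mul_assoc, mul_smul_comm, hdx, smul_add]
  abel

theorem lie_laplacian_euler (h : IsCCR d x) :
    ⁅∑ i, d i * d i, ∑ i, x i * d i⁆ = 2 • ∑ i, d i * d i := by
  rw [← lie_skew]
  simp [lie_sum, Ring.lie_mul, h.lie_euler_d, Finset.mul_sum, two_mul, Finset.sum_add_distrib]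

theorem lie_sumSq_euler (h : IsCCR d x) :
    ⁅∑ i, x i * x i, ∑ i, x i * d i⁆ = -(2 • ∑ i, x i * x i) := by
  rw [← lie_skew]
  simp [lie_sum, Ring.lie_mul, h.lie_euler_x, Finset.mul_sum, two_mul, Finset.sum_add_distrib]

end IsCCR
end CCR

section CAR

variable {A κ : Type*} [Ring A] [DecidableEq κ]

structure IsCAR (d g : κ → A) : Prop where
  anticomm_d_g : ∀ j k, d j * g k + g k * d j = if j = k then 1 else 0
  anticomm_d_d : ∀ j k, d j * d k + d k * d j = 0
  anticomm_g_g : ∀ j k, g j * g k + g k * g j = 0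

def pairSum {ι : Type*} [Fintype ι] (o e : ι → κ) (f : κ → A) : A := ∑ j, f (o j) * f (e j)

namespace IsCAR

variable {d g : κ → A}

theorem anticomm_g_d (h : IsCAR d g) (k l : κ) :
    g k * d l + d l * g k = if l = k then 1 else 0 := by
  rw [add_comm, h.anticomm_d_g]

variable {ι : Type*} [Fintype ι] {o e : ι → κ}

theorem lie_pairSum_d_g_fst (h : IsCAR d g) (hoe : Function.Injective (Sum.elim o e)) (l : ι) :
    ⁅pairSum o e d, g (o l)⁆ = -d (e l) := by
  classical
  have ho : Function.Injective o := hoe.comp Sum.inl_injective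
  have hne : ∀ j, e j ≠ o l := fun j hj => Sum.inr_ne_inl (hoe hj)
  simp [pairSum, sum_lie, Ring.mul_lie_eq_anticomm, h.anticomm_d_g, hne, ho.eq_iff]

theorem lie_pairSum_d_g_snd (h : IsCAR d g) (hoe : Function.Injective (Sum.elim o e)) (l : ι) :
    ⁅pairSum o e d, g (e l)⁆ = d (o l) := by
  classical
  have he : Function.Injective e := hoe.comp Sum.inr_injective
  have hne : ∀ j, o j ≠ e l := fun j hj => Sum.inl_ne_inr (hoe hj)
  simp [pairSum, sum_lie, Ring.mul_lie_eq_anticomm, h.anticomm_d_g, hne, he.eq_iff]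

variable [Fintype κ]

theorem lie_euler_g (h : IsCAR d g) (l : κ) : ⁅∑ k, g k * d k, g l⁆ = g l := by
  simp [sum_lie, Ring.mul_lie_eq_anticomm, h.anticomm_d_g, h.anticomm_g_g]

theorem lie_euler_d (h : IsCAR d g) (l : κ) : ⁅∑ k, g k * d k, d l⁆ = -d l := by
  simp [sum_lie, Ring.mul_lie_eq_anticomm, h.anticomm_d_d, h.anticomm_g_d]

theorem lie_pairSum_d_pairSum_g (h : IsCAR d g) (hoe : Function.Bijective (Sum.elim o e)) :
    ⁅pairSum o e d, pairSum o e g⁆ = ∑ k, g k * d k - Fintype.card ι • 1 := by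
  have hde : ∀ l, d (e l) * g (e l) = 1 - g (e l) * d (e l) := fun l => by
    rw [eq_sub_iff_add_eq, h.anticomm_d_g, if_pos rfl]
  rw [← hoe.sum_comp, Fintype.sum_sum_type, ← Finset.card_univ, ← Finset.sum_const,
    ← Finset.sum_add_distrib, ← Finset.sum_sub_distrib]
  simp only [pairSum.eq_1 o e g, lie_sum, Ring.lie_mul, h.lie_pairSum_d_g_fst hoe.1,
    h.lie_pairSum_d_g_snd hoe.1, Sum.elim_inl, Sum.elim_inr, neg_mul, hde]
  refine Finset.sum_congr rfl fun l _ => ?_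
  noncomm_ring

theorem lie_pairSum_d_euler (h : IsCAR d g) :
    ⁅pairSum o e d, ∑ k, g k * d k⁆ = 2 • pairSum o e d := by
  rw [← lie_skew]
  simp [pairSum, lie_sum, Ring.lie_mul, h.lie_euler_d, Finset.mul_sum, two_mul,
    Finset.sum_add_distrib]

theorem lie_pairSum_g_euler (h : IsCAR d g) :
    ⁅pairSum o e g, ∑ k, g k * d k⁆ = -(2 • pairSum o e g) := by
  rw [← lie_skew]
  simp [pairSum, lie_sum, Ring.lie_mul, h.lie_euler_g, Finset.mul_sum, two_mul,
    Finset.sum_add_distrib]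

end IsCAR
end CAR

section Representations

open MvPolynomial

theorem isCCR_pderiv_mulLeft_X {R σ : Type*} [CommRing R] [DecidableEq σ] :
    IsCCR (fun i : σ => (pderiv i : Derivation R (MvPolynomial σ R) _).toLinearMap)
      (fun i => LinearMap.mulLeft R (X i)) where
  lie_d_x i k := by
    ext p
    by_cases h : i = k <;> simp [Ring.lie_def, h, pderiv_X]
  lie_d_d i k := by
    have : ⁅pderiv i, pderiv k⁆ = (0 : Derivation R (MvPolynomial σ R) _) :=
      derivation_ext fun l => (Derivation.commutator_apply _).trans <| by
        simp [pderiv_X, Pi.single_apply, apply_ite (pderiv _)]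
    rw [← Derivation.commutator_coe_linear_map, this]
    rfl
  lie_x_x i k := by
    ext p
    simp [Ring.lie_def, mul_left_comm (X i)]


theorem isCAR_contractLeft_mulLeft_ι {R ι : Type*} [CommRing R] [DecidableEq ι] :
    IsCAR (fun j : ι => (CliffordAlgebra.contractLeft (LinearMap.proj j : (ι → R) →ₗ[R] R) :
        Module.End R (ExteriorAlgebra R (ι → R))))
      (fun k => LinearMap.mulLeft R (ExteriorAlgebra.ι R (Pi.single k 1))) where
  anticomm_d_g j k := by
    refine LinearMap.ext fun w => ?_
    by_cases h : j = k <;> simp [CliffordAlgebra.contractLeft_ι_mul, h]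
  anticomm_d_d j k := by
    refine LinearMap.ext fun w => ?_
    simp only [LinearMap.add_apply, Module.End.mul_apply, LinearMap.zero_apply]
    rw [CliffordAlgebra.contractLeft_comm, neg_add_cancel]
  anticomm_g_g j k := by
    refine LinearMap.ext fun w => ?_
    simp [← mul_assoc, ← add_mul, ExteriorAlgebra.ι_add_mul_swap]

end Representations

section TensorProduct

open Module.End

variable {R M N : Type*} [CommRing R] [AddCommGroup M] [Module R M] [AddCommGroup N] [Module R N]

theorem lie_rTensor_add_lTensor (f f' : Module.End R M) (g g' : Module.End R N) :
    ⁅rTensorAlgHom R M N f + lTensorAlgHom R N M g,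
        rTensorAlgHom R M N f' + lTensorAlgHom R N M g'⁆ =
      rTensorAlgHom R M N ⁅f, f'⁆ + lTensorAlgHom R N M ⁅g, g'⁆ := by
  have hcomm : ∀ (f : Module.End R M) (g : Module.End R N),
      ⁅rTensorAlgHom R M N f, lTensorAlgHom R N M g⁆ = 0 := fun f g => by
    rw [Ring.lie_def, sub_eq_zero]
    exact (LinearMap.rTensor_comp_lTensor M f g).trans (LinearMap.lTensor_comp_rTensor M f g).symm
  rw [add_lie, lie_add, lie_add, hcomm, ← lie_skew (lTensorAlgHom R N M g), hcomm]
  simp [Ring.lie_def]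

end TensorProduct

end LieCalculus

namespace SuperPoly

open Module.End MvPolynomial TensorProduct

variable (m n : ℕ)

abbrev ofBosonic : Module.End ℝ (MvPolynomial (Fin m) ℝ) →ₐ[ℝ] Module.End ℝ (SuperPoly m n) :=
  rTensorAlgHom ℝ _ _

abbrev ofFermionic : Module.End ℝ (GrassmannAlgebra n) →ₐ[ℝ] Module.End ℝ (SuperPoly m n) :=
  lTensorAlgHom ℝ _ _

theorem mulOp_eq_lmul : mulOp m n = Algebra.lmul ℝ (SuperPoly m n) := rfl

theorem mulOp_tmul_one (p : MvPolynomial (Fin m) ℝ) :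
    mulOp m n (p ⊗ₜ 1) = ofBosonic m n (LinearMap.mulLeft ℝ p) :=
  TensorProduct.ext' fun q w => by
    simp only [mulOp, LinearMap.mulLeft_apply, Algebra.TensorProduct.tmul_mul_tmul, one_mul]
    rfl

theorem mulOp_one_tmul (w : GrassmannAlgebra n) :
    mulOp m n (1 ⊗ₜ w) = ofFermionic m n (LinearMap.mulLeft ℝ w) :=
  TensorProduct.ext' fun q w' => by
    simp only [mulOp, LinearMap.mulLeft_apply, Algebra.TensorProduct.tmul_mul_tmul, one_mul]
    rfl

theorem mulOp_xb (i : Fin m) : mulOp m n (xb m n i) = ofBosonic m n (LinearMap.mulLeft ℝ (X i)) :=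
  mulOp_tmul_one m n (X i)

theorem mulOp_xf (k : Fin (2 * n)) :
    mulOp m n (xf m n k) = ofFermionic m n (LinearMap.mulLeft ℝ (gen n k)) :=
  mulOp_one_tmul m n (gen n k)

theorem Db_eq (i : Fin m) : Db m n i = ofBosonic m n (pderiv i).toLinearMap := rfl

theorem Df_eq (k : Fin (2 * n)) : Df m n k = ofFermionic m n (fdLam n k) := rfl

theorem sumElim_oddIdx_evenIdx_bijective :
    Function.Bijective (Sum.elim (oddIdx n) (evenIdx n)) := by
  refine (Fintype.bijective_iff_injective_and_card _).2 ⟨?_, by simp [two_mul]⟩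
  refine Function.Injective.sumElim (fun j k h => ?_) (fun j k h => ?_) fun j k h => ?_ <;>
    simp only [oddIdx, evenIdx, Fin.ext_iff] at h <;> omega

theorem lap_eq :
    lap m n = ofBosonic m n (∑ i, (pderiv i).toLinearMap * (pderiv i).toLinearMap) +
    ofFermionic m n ((-4 : ℝ) • pairSum (oddIdx n) (evenIdx n) (fdLam n)) := by
  simp only [lap, lapB, lapF, pairSum, Db_eq, Df_eq, ← Module.End.mul_eq_comp, map_sum, map_mul,
    map_smul]

theorem euler_eq :
    euler m n =
    ofBosonic m n (∑ i, LinearMap.mulLeft ℝ (X i) * (pderiv i).toLinearMap) +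
    ofFermionic m n (∑ k, LinearMap.mulLeft ℝ (gen n k) * fdLam n k) := by
  simp only [euler, eulerB, eulerF, mulOp_xb, mulOp_xf, Db_eq, Df_eq, ← Module.End.mul_eq_comp,
    map_sum, map_mul]

theorem mulOp_R2_eq :
    mulOp m n (R2 m n) =
    ofBosonic m n (∑ i, LinearMap.mulLeft ℝ (X i) * LinearMap.mulLeft ℝ (X i)) +
    ofFermionic m n (-pairSum (oddIdx n) (evenIdx n) fun k => LinearMap.mulLeft ℝ (gen n k)) := by
  rw [mulOp_eq_lmul]
  simp only [R2, r2, θ2, pairSum, map_add, map_neg, map_sum, map_mul, ← mulOp_eq_lmul, mulOp_xb,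
    mulOp_xf]

theorem isCCR_bosonic : IsCCR (fun i : Fin m => (pderiv i : Derivation ℝ _ _).toLinearMap)
    (fun i => LinearMap.mulLeft ℝ (X i)) :=
  isCCR_pderiv_mulLeft_X

theorem isCAR_fermionic : IsCAR (fdLam n) (fun k => LinearMap.mulLeft ℝ (gen n k)) :=
  isCAR_contractLeft_mulLeft_ι

theorem lie_lap_mulOp_R2 :
    ⁅lap m n, mulOp m n (R2 m n)⁆ =
      (4 : ℝ) • euler m n + (2 * ((m : ℝ) - 2 * n)) • LinearMap.id := by
  rw [← Module.End.one_eq_id, lap_eq, mulOp_R2_eq, lie_rTensor_add_lTensor,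
    (isCCR_bosonic m).lie_laplacian_sumSq,
    Ring.smul_lie (-4 : ℝ) (pairSum (oddIdx n) (evenIdx n) (fdLam n)), Ring.lie_neg,
    (isCAR_fermionic n).lie_pairSum_d_pairSum_g (sumElim_oddIdx_evenIdx_bijective n), euler_eq]
  simp only [map_add, map_sub, map_smul, map_nsmul, map_neg, map_one, Fintype.card_fin]
  module

theorem lie_lap_euler : ⁅lap m n, euler m n⁆ = (2 : ℝ) • lap m n := by
  rw [lap_eq, euler_eq, lie_rTensor_add_lTensor, (isCCR_bosonic m).lie_laplacian_euler,
    Ring.smul_lie (-4 : ℝ) (pairSum (oddIdx n) (evenIdx n) (fdLam n)),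
    (isCAR_fermionic n).lie_pairSum_d_euler]
  simp only [map_smul, map_nsmul]
  module

theorem lie_mulOp_R2_euler : ⁅mulOp m n (R2 m n), euler m n⁆ = (-2 : ℝ) • mulOp m n (R2 m n) := by
  rw [mulOp_R2_eq, euler_eq, lie_rTensor_add_lTensor, (isCCR_bosonic m).lie_sumSq_euler,
    Ring.neg_lie, (isCAR_fermionic n).lie_pairSum_g_euler]
  simp only [map_neg, map_nsmul]
  module

end SuperPoly

open SuperPoly in
/-- The operators −∇²/2, R²/2 and 𝔼 + M/2 realize 𝔰𝔩(2):
[∇²/2, R²/2] = 𝔼 + M/2, [∇²/2, 𝔼 + M/2] = 2·(∇²/2) and [R²/2, 𝔼 + M/2] = −2·(R²/2),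
as linear operators on 𝒫 = ℝ[x_1,…,x_m] ⊗ Λ_{2n}, where M = m − 2n. -/
theorem sl2_relations (m n : ℕ) :
    (((1:ℝ)/2) • lap m n) ∘ₗ (((1:ℝ)/2) • mulOp m n (R2 m n)) -
        (((1:ℝ)/2) • mulOp m n (R2 m n)) ∘ₗ (((1:ℝ)/2) • lap m n) =
      euler m n + (((m:ℝ) - 2*n)/2) •
        (LinearMap.id : SuperPoly m n →ₗ[ℝ] SuperPoly m n) ∧
    (((1:ℝ)/2) • lap m n) ∘ₗ
          (euler m n + (((m:ℝ) - 2*n)/2) •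
            (LinearMap.id : SuperPoly m n →ₗ[ℝ] SuperPoly m n)) -
        (euler m n + (((m:ℝ) - 2*n)/2) •
            (LinearMap.id : SuperPoly m n →ₗ[ℝ] SuperPoly m n)) ∘ₗ (((1:ℝ)/2) • lap m n) =
      (2:ℝ) • (((1:ℝ)/2) • lap m n) ∧
    (((1:ℝ)/2) • mulOp m n (R2 m n)) ∘ₗ
          (euler m n + (((m:ℝ) - 2*n)/2) •
            (LinearMap.id : SuperPoly m n →ₗ[ℝ] SuperPoly m n)) -
        (euler m n + (((m:ℝ) - 2*n)/2) •
            (LinearMap.id : SuperPoly m n →ₗ[ℝ] SuperPoly m n)) ∘ₗ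
          (((1:ℝ)/2) • mulOp m n (R2 m n)) =
      (-2:ℝ) • (((1:ℝ)/2) • mulOp m n (R2 m n)) := by
  have hA := lie_lap_mulOp_R2 m n
  have hB := lie_lap_euler m n
  have hC := lie_mulOp_R2_euler m n
  -- the goal's `1` below is produced by `one_eq_id`; `hA` must carry that same `1`
  rw [Ring.lie_def, ← Module.End.one_eq_id] at hA
  rw [Ring.lie_def] at hB hC
  simp only [← Module.End.mul_eq_comp, ← Module.End.one_eq_id, smul_mul_assoc, mul_smul_comm,
    mul_add, add_mul, mul_one, one_mul]
  refine ⟨?_, ?_, ?_⟩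
  · linear_combination (norm := module) ((1 : ℝ) / 4) • hA
  · linear_combination (norm := module) ((1 : ℝ) / 2) • hB
  · linear_combination (norm := module) ((1 : ℝ) / 2) • hC
end
end

section
/- For 1 ≤ i ≤ m, 1 ≤ j ≤ n, 0 ≤ q ≤ n, 1 ≤ k ≤ n − q and p ≥ 0, the odd orthosymplectic operator L_{i,2j−1+m} applied to the polynomial f_{k,p,q} gives L_{i,2j−1+m}(f_{k,p,q}) = 2k (M/2 + p + q + k − 1) f_{k−1,p+1,q+1} · x_i · x`_{2j−1}. -/
/- ## Setup: super polynomials on ℝ^{m|2n} -/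

open scoped TensorProduct

noncomputable section

set_option synthInstance.maxHeartbeats 1000000
set_option maxHeartbeats 1000000

/-!
On a monomial r^{2a} θ^{2s} the operator L_{i,2j−1+m} = 2 x_i ∂_{x`_{2j}} − x`_{2j−1} ∂_{x_i}
lowers one exponent at a time: ∂_{x_i} turns r^{2a} into 2a x_i r^{2a−2}, and since θ² is even
with ∂_{x`_{2j}} θ² = x`_{2j−1}, ∂_{x`_{2j}} turns θ^{2s} into s x`_{2j−1} θ^{2s−2}. Collecting
terms, L f_{k,p,q} = Σ_t (2(t+1) a_{t+1} − 2(k−t) a_t) r^{2(k−1−t)} θ^{2t} x_i x`_{2j−1}, and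
2(t+1) a_{t+1} − 2(k−t) a_t = 2k(M/2+p+q+k−1) b_t for the coefficients b_t of f_{k−1,p+1,q+1}
follows from (t+1) C(k,t+1) = (k−t) C(k,t) = k C(k−1,t), (N−t)! = (N−t)(N−t−1)! for N = n − q,
and Γ(x+1) = x Γ(x).
-/

namespace SuperPoly

variable (m n : ℕ)

def rSq : MvPolynomial (Fin m) ℝ := ∑ i : Fin m, MvPolynomial.X i * MvPolynomial.X i

def θSq : GrassmannAlgebra n := - ∑ j : Fin n, gen n (oddIdx n j) * gen n (evenIdx n j)

lemma gen_mul_gen (a b : Fin (2*n)) : gen n a * gen n b = - (gen n b * gen n a) :=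
  eq_neg_of_add_eq_zero_left (ExteriorAlgebra.ι_add_mul_swap _ _)

lemma commute_gen_mul_gen (a b c : Fin (2*n)) : Commute (gen n a * gen n b) (gen n c) := by
  rw [Commute, SemiconjBy, mul_assoc, gen_mul_gen n b c, mul_neg, ← mul_assoc,
    gen_mul_gen n a c, neg_mul, neg_neg, mul_assoc]

lemma commute_θSq_gen (a : Fin (2*n)) : Commute (θSq n) (gen n a) :=
  (Commute.sum_left _ _ _ fun _ _ => commute_gen_mul_gen n _ _ a).neg_left

lemma proj_evenIdx_single_oddIdx (j j' : Fin n) :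
    LinearMap.proj (R := ℝ) (φ := fun _ : Fin (2*n) => ℝ) (evenIdx n j)
      (Pi.single (oddIdx n j') 1) = 0 := by
  rw [LinearMap.proj_apply, Pi.single_apply, if_neg]
  simp only [evenIdx, oddIdx, Fin.ext_iff]
  omega

lemma proj_evenIdx_single_evenIdx (j j' : Fin n) :
    LinearMap.proj (R := ℝ) (φ := fun _ : Fin (2*n) => ℝ) (evenIdx n j)
      (Pi.single (evenIdx n j') 1) = if j = j' then 1 else 0 := by
  rw [LinearMap.proj_apply, Pi.single_apply]
  congr 1
  simp only [eq_iff_iff, evenIdx, Fin.ext_iff]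
  omega

lemma fdLam_θSq_mul (j : Fin n) (x : GrassmannAlgebra n) :
    fdLam n (evenIdx n j) (θSq n * x) =
      gen n (oddIdx n j) * x + θSq n * fdLam n (evenIdx n j) x := by
  simp only [fdLam, θSq, gen, ExteriorAlgebra.ι, neg_mul, map_neg, Finset.sum_mul, map_sum,
    mul_assoc, CliffordAlgebra.contractLeft_ι_mul, proj_evenIdx_single_oddIdx,
    proj_evenIdx_single_evenIdx, zero_smul, zero_sub, ite_smul, one_smul, mul_sub,
    mul_ite, mul_zero, Finset.sum_sub_distrib, Finset.sum_neg_distrib, Finset.sum_ite_eq,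
    Finset.mem_univ, if_true]
  abel

lemma fdLam_θSq_pow (j : Fin n) (s : ℕ) :
    fdLam n (evenIdx n j) (θSq n ^ s) = s • (gen n (oddIdx n j) * θSq n ^ (s - 1)) := by
  induction s with
  | zero => simp [fdLam, CliffordAlgebra.contractLeft_one]
  | succ s ih =>
    rw [pow_succ', fdLam_θSq_mul, ih, mul_smul_comm, ← mul_assoc,
      (commute_θSq_gen n _).eq, mul_assoc, ← pow_succ']
    rcases s with _ | s
    · simp
    · rw [Nat.add_sub_cancel, succ_nsmul' _ (s + 1)]
      rfl

lemma pderiv_rSq (i : Fin m) : MvPolynomial.pderiv i (rSq m) = 2 * MvPolynomial.X i := by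
  simp only [rSq, map_sum, Derivation.leibniz, MvPolynomial.pderiv_X, Pi.single_apply,
    smul_eq_mul, mul_ite, mul_one, mul_zero, Finset.sum_add_distrib, Finset.sum_ite_eq',
    Finset.mem_univ, if_true]
  ring

lemma pderiv_rSq_pow (i : Fin m) (a : ℕ) :
    MvPolynomial.pderiv i (rSq m ^ a) = (2 * a : ℝ) • (MvPolynomial.X i * rSq m ^ (a - 1)) := by
  rw [Derivation.leibniz_pow, pderiv_rSq, MvPolynomial.smul_eq_C_mul, smul_eq_mul,
    nsmul_eq_mul]
  simp only [map_mul, map_ofNat, map_natCast]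
  ring

lemma ginv_bos (b : Fin (m + 2*n)) (i : Fin m) :
    ginv m n b ⟨i.1, by omega⟩ = if b = ⟨i.1, by omega⟩ then 1 else 0 := by
  have := i.2
  unfold ginv
  split_ifs <;> simp only [Fin.ext_iff] at * <;> omega

lemma ginv_ferm (b : Fin (m + 2*n)) (j : Fin n) :
    ginv m n b ⟨m + 2*j.1, by omega⟩ = if b = ⟨m + 2*j.1 + 1, by omega⟩ then -2 else 0 := by
  have := j.2
  unfold ginv
  split_ifs <;> simp only [Fin.ext_iff] at * <;> omega

lemma nabla_bos (i : Fin m) : nabla m n ⟨i.1, by omega⟩ = Db m n i := by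
  have := i.2
  simp only [nabla, ginv_bos, ite_mul, zero_mul, ite_smul, zero_smul, Finset.sum_ite_eq',
    Finset.mem_univ, if_true, sgn, DX, dif_pos this, if_pos this, one_mul, one_smul]

lemma XV_bos (i : Fin m) : XV m n ⟨i.1, by omega⟩ = xb m n i := dif_pos i.2

lemma XV_ferm (j : Fin n) : XV m n ⟨m + 2*j.1, by omega⟩ = xf m n (oddIdx n j) := by
  rw [XV, dif_neg (by simp)]
  congr 1
  ext
  simp [oddIdx]

lemma DX_ferm (j : Fin n) : DX m n ⟨m + 2*j.1 + 1, by omega⟩ = Df m n (evenIdx n j) := by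
  rw [DX, dif_neg (by simp only [not_lt]; omega)]
  congr 1
  ext
  simp only [evenIdx]
  omega

lemma nabla_ferm (j : Fin n) :
    nabla m n ⟨m + 2*j.1, by omega⟩ = (2 : ℝ) • Df m n (evenIdx n j) := by
  simp only [nabla, ginv_ferm, ite_mul, zero_mul, ite_smul, zero_smul, Finset.sum_ite_eq',
    Finset.mem_univ, if_true, sgn, DX_ferm, if_neg (show ¬ m + 2*j.1 + 1 < m by omega)]
  norm_num

lemma Lop_bos_ferm (i : Fin m) (j : Fin n) (f : SuperPoly m n) :
    Lop m n ⟨i.1, by omega⟩ ⟨m + 2*j.1, by omega⟩ f =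
      (2 : ℝ) • (xb m n i * Df m n (evenIdx n j) f) - xf m n (oddIdx n j) * Db m n i f := by
  have hsgn : sgn2 m n ⟨i.1, by omega⟩ ⟨m + 2*j.1, by omega⟩ = 1 :=
    if_neg fun h => absurd h.1 (by simp)
  simp only [Lop, hsgn, XV_bos, XV_ferm, nabla_bos, nabla_ferm, one_smul, mulOp,
    LinearMap.sub_apply, LinearMap.comp_apply, LinearMap.smul_apply, LinearMap.mulLeft_apply,
    map_smul]

open Algebra.TensorProduct in
lemma r2_pow_mul_θ2_pow (a s : ℕ) : r2 m n ^ a * θ2 m n ^ s = (rSq m ^ a) ⊗ₜ (θSq n ^ s) := by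
  have hr : r2 m n = rSq m ⊗ₜ 1 := by
    simp [r2, rSq, xb, tmul_mul_tmul, TensorProduct.sum_tmul]
  have hθ : θ2 m n = 1 ⊗ₜ θSq n := by
    simp [θ2, θSq, xf, tmul_mul_tmul, TensorProduct.tmul_sum, TensorProduct.tmul_neg]
  rw [hr, hθ, tmul_pow, tmul_pow, tmul_mul_tmul, one_pow, one_pow, mul_one, one_mul]

open Algebra.TensorProduct in
lemma r2_pow_mul_θ2_pow_mul_xb_mul_xf (i : Fin m) (j : Fin (2*n)) (a s : ℕ) :
    r2 m n ^ a * θ2 m n ^ s * xb m n i * xf m n j =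
      (MvPolynomial.X i * rSq m ^ a) ⊗ₜ (gen n j * θSq n ^ s) := by
  rw [r2_pow_mul_θ2_pow, xb, xf, tmul_mul_tmul, tmul_mul_tmul, mul_one, mul_one]
  congr 1
  · exact mul_comm _ _
  · exact ((commute_θSq_gen n j).pow_left s).eq

lemma xf_mul_Db_r2_pow_mul_θ2_pow (i : Fin m) (j : Fin (2*n)) (a s : ℕ) :
    xf m n j * Db m n i (r2 m n ^ a * θ2 m n ^ s) =
      (2 * a : ℝ) • (r2 m n ^ (a - 1) * θ2 m n ^ s * xb m n i * xf m n j) := by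
  rw [r2_pow_mul_θ2_pow, Db, LinearMap.rTensor_tmul, Derivation.coeFn_coe, pderiv_rSq_pow,
    r2_pow_mul_θ2_pow_mul_xb_mul_xf, xf, Algebra.TensorProduct.tmul_mul_tmul, one_mul,
    TensorProduct.smul_tmul']

lemma xb_mul_Df_r2_pow_mul_θ2_pow (i : Fin m) (j : Fin n) (a s : ℕ) :
    xb m n i * Df m n (evenIdx n j) (r2 m n ^ a * θ2 m n ^ s) =
      (s : ℝ) • (r2 m n ^ a * θ2 m n ^ (s - 1) * xb m n i * xf m n (oddIdx n j)) := by
  rw [r2_pow_mul_θ2_pow, Df, LinearMap.lTensor_tmul, fdLam_θSq_pow,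
    r2_pow_mul_θ2_pow_mul_xb_mul_xf, xb, Algebra.TensorProduct.tmul_mul_tmul, one_mul,
    TensorProduct.tmul_smul, Nat.cast_smul_eq_nsmul]

lemma Lop_r2_pow_mul_θ2_pow (i : Fin m) (j : Fin n) (a s : ℕ) :
    Lop m n ⟨i.1, by omega⟩ ⟨m + 2*j.1, by omega⟩ (r2 m n ^ a * θ2 m n ^ s) =
      (2 * s : ℝ) • (r2 m n ^ a * θ2 m n ^ (s - 1) * xb m n i * xf m n (oddIdx n j)) -
        (2 * a : ℝ) • (r2 m n ^ (a - 1) * θ2 m n ^ s * xb m n i * xf m n (oddIdx n j)) := by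
  rw [Lop_bos_ferm, xb_mul_Df_r2_pow_mul_θ2_pow, xf_mul_Db_r2_pow_mul_θ2_pow, smul_smul]

lemma succ_mul_acoef_succ (p q : ℕ) {k t : ℕ} (hm : 1 ≤ m) (ht : t ≤ k) :
    (t + 1 : ℝ) * acoef m n (k + 1) p q (t + 1) =
      (k + 1 : ℝ) * ((m : ℝ) / 2 + p + k - t) * acoef m n k (p + 1) (q + 1) t := by
  have hx : 0 < (m : ℝ) / 2 + p + k - t := by
    have : (1 : ℝ) ≤ m := by exact_mod_cast hm
    have : (t : ℝ) ≤ k := by exact_mod_cast ht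
    linarith [(p.cast_nonneg : (0 : ℝ) ≤ p)]
  have hΓ := Real.Gamma_add_one hx.ne'
  have hch : ((k + 1).choose (t + 1) : ℝ) * (t + 1) = (k + 1) * k.choose t := by
    exact_mod_cast (Nat.add_one_mul_choose_eq k t).symm
  unfold acoef
  rw [show n - q - (t + 1) = n - (q + 1) - t by omega,
    show n - q - (k + 1) = n - (q + 1) - k by omega]
  push_cast
  rw [show (m : ℝ) / 2 + (p + 1) + k - t = (m : ℝ) / 2 + p + k - t + 1 by ring, hΓ,
    show (m : ℝ) / 2 + p + (k + 1) - (t + 1) = (m : ℝ) / 2 + p + k - t by ring,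
    show (m : ℝ) / 2 + (p + 1) + k = (m : ℝ) / 2 + p + (k + 1) by ring]
  have hA := (Real.Gamma_pos_of_pos hx).ne'
  generalize Real.Gamma ((m : ℝ) / 2 + p + k - t) = A at hA ⊢
  generalize (m : ℝ) / 2 + p + k - t = x at hx ⊢
  field_simp
  linear_combination hch

lemma sub_mul_acoef (p q : ℕ) {k t : ℕ} (ht : t ≤ k + 1) (hqt : q + t < n) :
    (k + 1 - t : ℝ) * acoef m n (k + 1) p q t =
      (k + 1 : ℝ) * (n - q - t) * acoef m n k (p + 1) (q + 1) t := by
  have hch : (k.choose t : ℝ) * (k + 1) = (k + 1).choose t * (k + 1 - t) := by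
    exact_mod_cast Nat.choose_mul_succ_eq k t
  have hfact : ((n - q - t).factorial : ℝ) = (n - q - t) * (n - (q + 1) - t).factorial := by
    have hN : ((n - (q + 1) - t : ℕ) : ℝ) + 1 = n - q - t := by
      rw [eq_sub_iff_add_eq, eq_sub_iff_add_eq]
      exact_mod_cast (show n - (q + 1) - t + 1 + t + q = n by omega)
    rw [show n - q - t = n - (q + 1) - t + 1 by omega, Nat.factorial_succ, Nat.cast_mul,
      Nat.cast_succ, hN]
  unfold acoef
  rw [hfact, show n - q - (k + 1) = n - (q + 1) - k by omega]
  push_cast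
  rw [show (m : ℝ) / 2 + (p + 1) + k = (m : ℝ) / 2 + p + (k + 1) by ring]
  rw [← mul_assoc, ← mul_assoc, mul_comm (k + 1 - t : ℝ), ← hch]
  ring

lemma acoef_lowering (p q : ℕ) {k t : ℕ} (hm : 1 ≤ m) (hkn : q + k < n) (ht : t ≤ k) :
    2 * (t + 1 : ℝ) * acoef m n (k + 1) p q (t + 1) -
        2 * (k + 1 - t : ℝ) * acoef m n (k + 1) p q t =
      2 * (k + 1 : ℝ) * (((m : ℝ) - 2 * n) / 2 + p + q + (k + 1) - 1) *
        acoef m n k (p + 1) (q + 1) t := by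
  linear_combination 2 * succ_mul_acoef_succ m n p q hm ht -
    2 * sub_mul_acoef m n p q (by omega : t ≤ k + 1) (by omega : q + t < n)

lemma sum_range_smul_lowering {V : Type*} [AddCommGroup V] [Module ℝ V] (c : ℕ → ℝ)
    (u : ℕ → ℕ → V) (k : ℕ) :
    ∑ s ∈ Finset.range (k + 2), c s •
        ((2 * s : ℝ) • u (k + 1 - s) (s - 1) - (2 * (k + 1 - s : ℕ) : ℝ) • u (k + 1 - s - 1) s) =
      ∑ t ∈ Finset.range (k + 1), (2 * (t + 1 : ℝ) * c (t + 1) - 2 * (k + 1 - t : ℝ) * c t) •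
        u (k - t) t := by
  simp only [smul_sub, Finset.sum_sub_distrib, smul_smul]
  rw [Finset.sum_range_succ' _ (k + 1), Finset.sum_range_succ _ (k + 1)]
  simp only [Nat.cast_zero, mul_zero, zero_smul, add_zero, Nat.sub_self,
    Nat.cast_add, Nat.cast_one, add_tsub_cancel_right, ← Finset.sum_sub_distrib, sub_smul]
  refine Finset.sum_congr rfl fun t ht => ?_
  have htk : t ≤ k := Nat.lt_succ_iff.mp (Finset.mem_range.mp ht)
  rw [show k + 1 - (t + 1) = k - t by omega, show k + 1 - t - 1 = k - t by omega,
    Nat.cast_sub (by omega : t ≤ k + 1)]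
  push_cast
  module

end SuperPoly

open SuperPoly in
/-- For 1 ≤ i ≤ m, 1 ≤ j ≤ n, 0 ≤ q ≤ n, 1 ≤ k ≤ n−q and p ≥ 0, the odd
orthosymplectic operator L_{i,2j−1+m} satisfies
L_{i,2j−1+m}(f_{k,p,q}) = 2k(M/2+p+q+k−1) f_{k−1,p+1,q+1}·x_i·x`_{2j−1}. -/
theorem Lop_fkpq (m n : ℕ) (hm : 1 ≤ m) (k p q : ℕ) (hk1 : 1 ≤ k)
    (hk : k ≤ n - q) (i : Fin m) (j : Fin n) :
    Lop m n ⟨i.1, by have := i.2; omega⟩ ⟨m + 2*j.1, by have := j.2; omega⟩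
        (fkpq m n k p q) =
      ((2*k : ℝ) * (((m:ℝ) - 2*n)/2 + p + q + k - 1)) •
        (fkpq m n (k-1) (p+1) (q+1) * xb m n i * xf m n (oddIdx n j)) := by
  obtain ⟨k, rfl⟩ := Nat.exists_eq_add_of_le' hk1
  let u (a s : ℕ) : SuperPoly m n := r2 m n ^ a * θ2 m n ^ s * xb m n i * xf m n (oddIdx n j)
  calc Lop m n _ _ (fkpq m n (k + 1) p q)
      = ∑ s ∈ Finset.range (k + 2), acoef m n (k + 1) p q s •
          ((2 * s : ℝ) • u (k + 1 - s) (s - 1) -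
            (2 * (k + 1 - s : ℕ) : ℝ) • u (k + 1 - s - 1) s) := by
        simp only [fkpq, map_sum, map_smul, Lop_r2_pow_mul_θ2_pow, u]
    _ = ∑ t ∈ Finset.range (k + 1),
          (2 * (k + 1 : ℝ) * (((m : ℝ) - 2 * n) / 2 + p + q + (k + 1) - 1) *
            acoef m n k (p + 1) (q + 1) t) • u (k - t) t := by
        rw [sum_range_smul_lowering]
        refine Finset.sum_congr rfl fun t ht => ?_
        rw [acoef_lowering m n p q hm (by omega) (Nat.lt_succ_iff.mp (Finset.mem_range.mp ht))]
    _ = _ := by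
        simp only [fkpq, u, Nat.add_sub_cancel, Finset.sum_mul, Finset.smul_sum, smul_mul_assoc,
          mul_smul, Nat.cast_add, Nat.cast_one]
end
end
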